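/- For all natural numbers m, w ≥ 1, one has ST_MW(∅, m, w) = ST_MW(∅, m−1, w) + ST_MW(∅, m, w−1) + 2^(m+w). That is, the numbers ST_MW(∅, m, w) satisfy a Pascal-like recurrence. (Paper's Corollary 'recmw' for the empty crown multiset.) -/

import Mathlib

def STN : Multiset ℕ → ℕ → ℕ
  | C, 0 =>
      if C = 0 then 1
      else (C.attach.map (fun c => 2 * c.1 * STN (C.erase c.1) c.1)).sum
  | C, (η + 1) =>
      STN C η + (C.attach.map (fun c => 2 * c.1 * STN (C.erase c.1) (η + 1 + c.1))).sum
  termination_by C η => (Multiset.card C, η)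
  decreasing_by
    · exact Prod.Lex.left _ _ (Multiset.card_erase_lt_of_mem c.2)
    · exact Prod.Lex.right _ (Nat.lt_succ_self η)
    · exact Prod.Lex.left _ _ (Multiset.card_erase_lt_of_mem c.2)

def STW : Multiset ℕ → ℕ → ℕ
  | _, 0 => 0
  | C, 1 =>
      if C = 0 then 1
      else (C.attach.map (fun c => 4 * c.1 * STW (C.erase c.1) (c.1 + 1))).sum
  | C, (w + 2) =>
      2 * STW C (w + 1) +
        (C.attach.map (fun c => 4 * c.1 * STW (C.erase c.1) (w + 2 + c.1))).sum
  termination_by C w => (Multiset.card C, w)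
  decreasing_by
    · exact Prod.Lex.left _ _ (Multiset.card_erase_lt_of_mem c.2)
    · exact Prod.Lex.right _ (Nat.lt_succ_self (w + 1))
    · exact Prod.Lex.left _ _ (Multiset.card_erase_lt_of_mem c.2)

def STC (C : Multiset ℕ) : ℕ :=
  (C.map (fun c => c * STW (C.erase c) c)).sum

def STMW : Multiset ℕ → ℕ → ℕ → ℕ
  | _, 0, _ => 0
  | _, _ + 1, 0 => 0
  | C, m + 1, w + 1 =>
      2 * STMW C (m + 1) w +
      (C.attach.map (fun c => 4 * c.1 * STMW (C.erase c.1) (m + 1) (w + 1 + c.1))).sum +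
      ∑ η ∈ Finset.range (m + 1),
        4 * (C.powerset.map (fun C' =>
              Nat.choose (C.sum + Multiset.card C + (m + 1) + (w + 1) - 1)
                  (C'.sum + Multiset.card C' + η) *
                STN C' η * STN (C - C') ((m + 1) + (w + 1) - η - 1))).sum
  termination_by C m w => (Multiset.card C, w)
  decreasing_by
    · exact Prod.Lex.right _ (Nat.lt_succ_self w)
    · exact Prod.Lex.left _ _ (Multiset.card_erase_lt_of_mem c.2)

def STM (C : Multiset ℕ) (m : ℕ) : ℕ :=
  (∑ η ∈ Finset.range m,
    (C.powerset.map (fun C' =>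
        Nat.choose (C.sum + Multiset.card C + m - 1) (C'.sum + Multiset.card C' + η) *
          STN C' η * STN (C - C') (m - η - 1))).sum) +
  (C.map (fun c => c * STMW (C.erase c) m c)).sum

/-! With `C = ∅` the last sum of the recursion for `STMW` reduces to `4 ∑_{η<m} (m+w).choose η`,
so `f w := STMW 0 m w` satisfies `f (w+1) = 2 f w + 4 ∑_{η<m} (m+w).choose η`. The defect
`STMW 0 m w - STMW 0 (m-1) w - STMW 0 m (w-1)` then satisfies the same recursion, except that
the binomial terms cancel by Pascal's rule for partial row sums; so it doubles with each step in `w`,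
and it starts from `4 (2^m - 1) - 4 (2^(m-1) - 1) = 2^(m+1)`. -/

theorem STN_zero_left (η : ℕ) : STN 0 η = 1 := by
  induction η with
  | zero => rw [STN]; simp
  | succ η ih => rw [STN]; simp [ih]

theorem STMW_zero_middle (C : Multiset ℕ) (w : ℕ) : STMW C 0 w = 0 := by
  rw [STMW]

theorem STMW_zero_right (C : Multiset ℕ) (m : ℕ) : STMW C m 0 = 0 := by
  cases m <;> rw [STMW]

open Finset

theorem STMW_zero_left_succ (m w : ℕ) :
    STMW 0 m (w + 1) = 2 * STMW 0 m w + 4 * ∑ i ∈ range m, (m + w).choose i := by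
  cases m with
  | zero => simp [STMW_zero_middle]
  | succ m => rw [STMW]; simp [STN_zero_left, mul_sum, Nat.add_right_comm m 1 w]

theorem sum_range_choose_succ_succ (k n : ℕ) :
    ∑ i ∈ range (k + 1), (n + 1).choose i =
      ∑ i ∈ range (k + 1), n.choose i + ∑ i ∈ range k, n.choose i := by
  rw [sum_range_succ', sum_range_succ' (fun i => n.choose i)]
  simp only [Nat.choose_succ_succ', sum_add_distrib, Nat.choose_zero_right]
  ring

theorem sum_range_choose_self_add_one (n : ℕ) : ∑ i ∈ range n, n.choose i + 1 = 2 ^ n := by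
  rw [← Nat.sum_range_choose n, sum_range_succ, Nat.choose_self]

theorem STMW_zero_left_pascal (m w : ℕ) :
    STMW 0 (m + 1) (w + 1) = STMW 0 m (w + 1) + STMW 0 (m + 1) w + 2 ^ (m + w + 2) := by
  induction w with
  | zero =>
    have hm1 := sum_range_choose_self_add_one (m + 1)
    have hm := sum_range_choose_self_add_one m
    simp only [STMW_zero_left_succ, STMW_zero_right, Nat.add_zero, pow_succ] at hm1 hm ⊢
    omega
  | succ w ih =>
    have r1 := STMW_zero_left_succ (m + 1) (w + 1)
    have r2 := STMW_zero_left_succ m (w + 1)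
    have r3 := STMW_zero_left_succ (m + 1) w
    have pascal := sum_range_choose_succ_succ m (m + w + 1)
    rw [show m + 1 + (w + 1) = m + w + 1 + 1 by omega] at r1
    rw [show m + (w + 1) = m + w + 1 by omega] at r2
    rw [show m + 1 + w = m + w + 1 by omega] at r3
    rw [show m + (w + 1) + 2 = m + w + 2 + 1 by omega, pow_succ]
    omega

/-- Pascal-like recurrence for ST_MW(∅, m, w). -/
theorem STMW_empty_rec (m w : ℕ) (hm : 1 ≤ m) (hw : 1 ≤ w) :
    STMW 0 m w = STMW 0 (m - 1) w + STMW 0 m (w - 1) + 2 ^ (m + w) := by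
  obtain ⟨m, rfl⟩ := Nat.exists_eq_add_of_le' hm
  obtain ⟨w, rfl⟩ := Nat.exists_eq_add_of_le' hw
  rw [STMW_zero_left_pascal, Nat.add_sub_cancel, Nat.add_sub_cancel,
    show m + 1 + (w + 1) = m + w + 2 by ring]
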